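/- Let ((Q_k, M_k))_{k ≥ 1} be an i.i.d. sequence of pairs of real random variables with M_k > 0 almost surely, let p > 0 with ρ := E[M_1^p] < 1, let A_0 := 1 and A_n := M_1 ⋯ M_n for n ≥ 1, and let (Ẑ_n)_{n ≥ 1} be identically distributed nonnegative random variables with E[Ẑ_1^p] < ∞ such that for each n the random variable Ẑ_n is independent of A_{n−1}. Then the random variables Δ_n := A_{n−1} Ẑ_n converge to 0 almost surely as n → ∞. -/

import Mathlib

open MeasureTheory ProbabilityTheory Filter Finset
open scoped ENNReal Topology

/-!
By independence of `Ẑ_n` from `A_{n-1}` and of the factors of `A_{n-1}`, the `p`-th moment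
factorizes: `E|Δ_n|^p = ρ^(n-1) E[Ẑ_1^p]`. Since `ρ < 1` these moments are summable, so by
monotone convergence `∑ |Δ_n|^p < ∞` almost surely, and in particular `Δ_n → 0` almost surely.
-/

section
variable {Ω : Type*} {mΩ : MeasurableSpace Ω} {μ : Measure Ω}

theorem ae_tendsto_zero_of_tsum_lintegral_ne_top {F : ℕ → Ω → ℝ≥0∞}
    (hF : ∀ n, AEMeasurable (F n) μ) (hsum : ∑' n, ∫⁻ ω, F n ω ∂μ ≠ ∞) :
    ∀ᵐ ω ∂μ, Tendsto (fun n => F n ω) atTop (𝓝 0) := by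
  rw [← lintegral_tsum hF] at hsum
  filter_upwards [ae_lt_top' (AEMeasurable.tsum hF) hsum] with ω hω
  exact ENNReal.tendsto_atTop_zero_of_tsum_ne_top hω.ne

theorem tendsto_zero_of_tendsto_enorm_rpow {α E : Type*} [SeminormedAddGroup E] {l : Filter α}
    {x : α → E} {p : ℝ} (hp : 0 < p) (h : Tendsto (fun n => ‖x n‖ₑ ^ p) l (𝓝 0)) :
    Tendsto x l (𝓝 0) := by
  have := (ENNReal.continuous_rpow_const (y := p⁻¹)).tendsto 0 |>.comp h
  simp only [Function.comp_def, ENNReal.rpow_rpow_inv hp.ne',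
    ENNReal.zero_rpow_of_pos (inv_pos.2 hp)] at this
  exact tendsto_zero_iff_enorm_tendsto_zero.2 this

theorem ae_tendsto_zero_of_tsum_lintegral_enorm_rpow_ne_top {E : Type*} [SeminormedAddGroup E]
    [MeasurableSpace E] [OpensMeasurableSpace E] {X : ℕ → Ω → E} {p : ℝ} (hp : 0 < p)
    (hX : ∀ n, AEMeasurable (X n) μ) (hsum : ∑' n, ∫⁻ ω, ‖X n ω‖ₑ ^ p ∂μ ≠ ∞) :
    ∀ᵐ ω ∂μ, Tendsto (fun n => X n ω) atTop (𝓝 0) := by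
  filter_upwards [ae_tendsto_zero_of_tsum_lintegral_ne_top
    (fun n => (hX n).enorm.pow_const p) hsum] with ω hω
  exact tendsto_zero_of_tendsto_enorm_rpow hp hω

theorem lintegral_enorm_rpow_eq_ofReal_integral {X : Ω → ℝ} {p : ℝ} (hp : 0 ≤ p)
    (hX : 0 ≤ᵐ[μ] X) (hint : Integrable (fun ω => X ω ^ p) μ) :
    ∫⁻ ω, ‖X ω‖ₑ ^ p ∂μ = ENNReal.ofReal (∫ ω, X ω ^ p ∂μ) := by
  rw [ofReal_integral_eq_lintegral_ofReal hint (hX.mono fun ω h => Real.rpow_nonneg h p)]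
  refine lintegral_congr_ae ?_
  filter_upwards [hX] with ω h
  rw [Real.enorm_eq_ofReal h, ENNReal.ofReal_rpow_of_nonneg h hp]

theorem enorm_prod_rpow {ι 𝕜 : Type*} [SeminormedCommRing 𝕜] [NormMulClass 𝕜] [NormOneClass 𝕜]
    (s : Finset ι) (x : ι → 𝕜) {p : ℝ} (hp : 0 ≤ p) :
    ‖∏ i ∈ s, x i‖ₑ ^ p = ∏ i ∈ s, ‖x i‖ₑ ^ p := by
  rw [ENNReal.prod_rpow_of_nonneg hp]
  simp only [enorm, nnnorm_prod, ENNReal.ofNNReal_finsetProd]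

theorem lintegral_enorm_rpow_prod_mul {ι : Type*} {M : ι → Ω → ℝ} {Y : Ω → ℝ} {p : ℝ}
    (hp : 0 ≤ p) (s : Finset ι) (hM : ∀ i, Measurable (M i)) (hMindep : iIndepFun M μ)
    (hY : Measurable Y) (hindep : IndepFun (fun ω => ∏ i ∈ s, M i ω) Y μ) :
    ∫⁻ ω, ‖(∏ i ∈ s, M i ω) * Y ω‖ₑ ^ p ∂μ
      = (∏ i ∈ s, ∫⁻ ω, ‖M i ω‖ₑ ^ p ∂μ) * ∫⁻ ω, ‖Y ω‖ₑ ^ p ∂μ := by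
  have hφ : Measurable fun x : ℝ => ‖x‖ₑ ^ p := measurable_enorm.pow_const p
  have hMp : ∀ i, Measurable fun ω => ‖M i ω‖ₑ ^ p := fun i => hφ.comp (hM i)
  have hYp : Measurable fun ω => ‖Y ω‖ₑ ^ p := hφ.comp hY
  have hprod : IndepFun (fun ω => ∏ i ∈ s, ‖M i ω‖ₑ ^ p) (fun ω => ‖Y ω‖ₑ ^ p) μ := by
    simpa only [Function.comp_def, enorm_prod_rpow s _ hp] using hindep.comp hφ hφ
  simp_rw [enorm_mul, ENNReal.mul_rpow_of_nonneg _ _ hp, enorm_prod_rpow s _ hp]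
  rw [lintegral_mul_eq_lintegral_mul_lintegral_of_indepFun''
    (s.measurable_prod fun i _ => hMp i).aemeasurable hYp.aemeasurable hprod,
    lintegral_prod_eq_prod_lintegral_of_indepFun s (fun i ω => ‖M i ω‖ₑ ^ p)
      (hMindep.comp _ fun _ => hφ) hMp]

theorem lintegral_comp_eq_of_map_eq {β : Type*} [MeasurableSpace β] {X Y : Ω → β}
    (hX : Measurable X) (hY : Measurable Y) (h : μ.map X = μ.map Y) {f : β → ℝ≥0∞}
    (hf : Measurable f) : ∫⁻ ω, f (X ω) ∂μ = ∫⁻ ω, f (Y ω) ∂μ :=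
  (IdentDistrib.comp ⟨hX.aemeasurable, hY.aemeasurable, h⟩ hf).lintegral_eq
end

theorem weighted_iid_tendsto_zero_general
    {Ω : Type*} [MeasureSpace Ω]
    (ZM : ℕ → Ω → ℝ × ℝ) (hZMmeas : ∀ k, Measurable (ZM k))
    (hiid_indep : iIndepFun ZM ℙ)
    (hiid_ident : ∀ k, Measure.map (ZM k) ℙ = Measure.map (ZM 0) ℙ)
    (hMpos : ∀ k, ∀ᵐ ω ∂ℙ, 0 < (ZM k ω).2)
    (p : ℝ) (hp : 0 < p)
    (hMp_int : Integrable (fun ω => (ZM 0 ω).2 ^ p) ℙ)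
    (hρ : ∫ ω, (ZM 0 ω).2 ^ p ∂ℙ < 1)
    (Z : ℕ → Ω → ℝ) (hZmeas : ∀ n, Measurable (Z n))
    (hZnonneg : ∀ n ω, 0 ≤ Z n ω)
    (hZident : ∀ n, Measure.map (Z n) ℙ = Measure.map (Z 0) ℙ)
    (hZp : Integrable (fun ω => Z 0 ω ^ p) ℙ)
    (hZindep : ∀ n, IndepFun (Z n) (fun ω => ∏ i ∈ Finset.range n, (ZM i ω).2) ℙ) :
    ∀ᵐ ω ∂ℙ, Tendsto
      (fun n => (∏ i ∈ Finset.range n, (ZM i ω).2) * Z n ω) atTop (nhds 0) := by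
  have hM : ∀ i, Measurable fun ω => (ZM i ω).2 := fun i => measurable_snd.comp (hZMmeas i)
  have hφ : Measurable fun x : ℝ => ‖x‖ₑ ^ p := measurable_enorm.pow_const p
  have hρM : ∀ i, ∫⁻ ω, ‖(ZM i ω).2‖ₑ ^ p = ∫⁻ ω, ‖(ZM 0 ω).2‖ₑ ^ p := fun i =>
    lintegral_comp_eq_of_map_eq (hZMmeas i) (hZMmeas 0) (hiid_ident i) (hφ.comp measurable_snd)
  have hρ_lt_one : ∫⁻ ω, ‖(ZM 0 ω).2‖ₑ ^ p < 1 := by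
    rw [lintegral_enorm_rpow_eq_ofReal_integral hp.le ((hMpos 0).mono fun _ h => h.le) hMp_int]
    exact ENNReal.ofReal_lt_one.2 hρ
  have hZ : ∀ n, ∫⁻ ω, ‖Z n ω‖ₑ ^ p = ∫⁻ ω, ‖Z 0 ω‖ₑ ^ p := fun n =>
    lintegral_comp_eq_of_map_eq (hZmeas n) (hZmeas 0) (hZident n) hφ
  have hZ_ne_top : ∫⁻ ω, ‖Z 0 ω‖ₑ ^ p ≠ ∞ := by
    rw [lintegral_enorm_rpow_eq_ofReal_integral hp.le (ae_of_all _ (hZnonneg 0)) hZp]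
    exact ENNReal.ofReal_ne_top
  refine ae_tendsto_zero_of_tsum_lintegral_enorm_rpow_ne_top hp
    (fun n => ((Finset.range n).measurable_prod fun i _ => hM i).mul (hZmeas n) |>.aemeasurable) ?_
  simp_rw [lintegral_enorm_rpow_prod_mul (M := fun i ω => (ZM i ω).2) hp.le _ hM
    (hiid_indep.comp _ fun _ => measurable_snd) (hZmeas _) (hZindep _).symm, hρM, hZ, prod_const,
    card_range]
  rw [ENNReal.tsum_mul_right, ENNReal.tsum_geometric]
  exact ENNReal.mul_ne_top (ENNReal.inv_ne_top.2 (tsub_pos_of_lt hρ_lt_one).ne') hZ_ne_top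

/-- If `(Q_k, M_k)` are i.i.d. pairs with `M_k > 0` a.s., `ρ = E[M_1^p] < 1` for some
`p > 0`, `A_n = M_1 ⋯ M_n` (here 0-indexed: `A_{n-1}` for the pair number `n ≥ 1` is
`∏_{i < n-1}`), and `(Ẑ_n)` are identically distributed nonnegative random variables
with `E[Ẑ_1^p] < ∞` such that `Ẑ_n` is independent of `A_{n-1}`, then
`Δ_n = A_{n-1} Ẑ_n → 0` almost surely. -/
theorem weighted_iid_tendsto_zero
    {Ω : Type*} [MeasureSpace Ω] [IsProbabilityMeasure (ℙ : Measure Ω)]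
    (ZM : ℕ → Ω → ℝ × ℝ) (hZMmeas : ∀ k, Measurable (ZM k))
    (hiid_indep : iIndepFun ZM ℙ)
    (hiid_ident : ∀ k, Measure.map (ZM k) ℙ = Measure.map (ZM 0) ℙ)
    (hMpos : ∀ k, ∀ᵐ ω ∂ℙ, 0 < (ZM k ω).2)
    (p : ℝ) (hp : 0 < p)
    (hMp_int : Integrable (fun ω => (ZM 0 ω).2 ^ p) ℙ)
    (hρ : ∫ ω, (ZM 0 ω).2 ^ p ∂ℙ < 1)
    (Z : ℕ → Ω → ℝ) (hZmeas : ∀ n, Measurable (Z n))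
    (hZnonneg : ∀ n ω, 0 ≤ Z n ω)
    (hZident : ∀ n, Measure.map (Z n) ℙ = Measure.map (Z 0) ℙ)
    (hZp : Integrable (fun ω => Z 0 ω ^ p) ℙ)
    (hZindep : ∀ n, IndepFun (Z n) (fun ω => ∏ i ∈ Finset.range n, (ZM i ω).2) ℙ) :
    ∀ᵐ ω ∂ℙ, Tendsto
      (fun n => (∏ i ∈ Finset.range n, (ZM i ω).2) * Z n ω) atTop (nhds 0) :=
  weighted_iid_tendsto_zero_general ZM hZMmeas hiid_indep hiid_ident hMpos p hp hMp_int hρ Z hZmeas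
    hZnonneg hZident hZp hZindep
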